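/- There is a constant C such that for every BNL-program Λ over a finite linearly ordered set T of schema variables, of size s and depth d, there exist a finite linearly ordered set T' with T ⊆ T' and a fully-open BNL-program Λ' over T' such that Λ' is asynchronously equivalent to Λ, the size of Λ' is at most C·s·(d+1), and the computation delay of Λ' relative to Λ is at most C·(d+1). -/

import Mathlib

/-! ### Boolean network logic (BNL) -/

/-- Formulas of Boolean network logic (BNL), over schema variables indexed by `ℕ`. -/
inductive BForm where
  | tru : BForm
  | var : ℕ → BForm
  | not : BForm → BForm
  | and : BForm → BForm → BForm

namespace BForm

/-- Truth value of a BNL-formula under a valuation of the schema variables. -/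
def eval (g : ℕ → Bool) : BForm → Bool
  | tru => true
  | var x => g x
  | not φ => !(eval g φ)
  | and φ ψ => eval g φ && eval g ψ

/-- Number of occurrences of `⊤`, variables, `¬` and `∧`. -/
def size : BForm → ℕ
  | tru => 1
  | var _ => 1
  | not φ => size φ + 1
  | and φ ψ => size φ + size ψ + 1

/-- Connective-nesting depth. -/
def depth : BForm → ℕ
  | tru => 0
  | var _ => 0
  | not φ => depth φ + 1
  | and φ ψ => max (depth φ) (depth ψ) + 1

/-- The set of schema variables occurring in a formula. -/
def vars : BForm → Finset ℕ
  | tru => ∅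
  | var x => {x}
  | not φ => vars φ
  | and φ ψ => vars φ ∪ vars ψ

end BForm

/-- A BNL-program over the finite set `T` of schema variables (linearly ordered as natural
numbers), with input predicates `I`, terminal values `term` (relevant on `T \ I`), iteration
clause bodies `iter` (relevant on `T`), print predicates `Pr` and attention predicates `At`. -/
structure BNL where
  T : Finset ℕ
  I : Finset ℕ
  hIT : I ⊆ T
  term : ℕ → Bool
  iter : ℕ → BForm
  hiter : ∀ X ∈ T, (iter X).vars ⊆ T
  Pr : Finset ℕ
  hPr : Pr ⊆ T
  At : Finset ℕ
  hAt : At ⊆ T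

/-- The valuation of the elements of a finite set `I ⊆ ℕ` induced by the bit string `u`,
via the increasing enumeration of `I`. -/
def inputVal (I : Finset ℕ) (u : ℕ → Bool) (X : ℕ) : Bool :=
  u ((I.sort (· ≤ ·)).idxOf X)

namespace BNL

/-- The global configuration of a BNL-program at round `t` on input bit string `u`. -/
def conf (Λ : BNL) (u : ℕ → Bool) : ℕ → ℕ → Bool
  | 0 => fun X => if X ∈ Λ.I then inputVal Λ.I u X else Λ.term X
  | t + 1 => fun X => (Λ.iter X).eval (Λ.conf u t)

/-- The global configuration string at round `t`: the values on `T` in increasing order. -/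
def confStr (Λ : BNL) (u : ℕ → Bool) (t : ℕ) : List Bool :=
  (Λ.T.sort (· ≤ ·)).map (Λ.conf u t)

/-- Round `t` is an output round iff some attention predicate is true at round `t`. -/
def attn (Λ : BNL) (u : ℕ → Bool) (t : ℕ) : Prop :=
  ∃ X ∈ Λ.At, Λ.conf u t X = true

/-- The print string at round `t`: the values of the print predicates in increasing order. -/
def out (Λ : BNL) (u : ℕ → Bool) (t : ℕ) : List Bool :=
  (Λ.Pr.sort (· ≤ ·)).map (Λ.conf u t)

/-- The size of a BNL-program: the total number of occurrences of `⊤`, variables, `¬`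
and `∧` in its terminal and iteration clauses. -/
def size (Λ : BNL) : ℕ :=
  (Λ.T \ Λ.I).card + ∑ X ∈ Λ.T, (Λ.iter X).size

/-- The depth of a BNL-program: the maximum depth of the bodies of its iteration clauses. -/
def depth (Λ : BNL) : ℕ :=
  Λ.T.sup fun X => (Λ.iter X).depth

/-- Pointwise transient time: the least `t` such that `g_t = g_{t+c}` on `T` for some `c ≥ 1`. -/
noncomputable def transientAt (Λ : BNL) (u : ℕ → Bool) : ℕ :=
  sInf {t | ∃ c, 1 ≤ c ∧ ∀ X ∈ Λ.T, Λ.conf u (t + c) X = Λ.conf u t X}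

/-- The transient time of a program: the maximum of its pointwise transient times. -/
def HasTransientTime (Λ : BNL) (n : ℕ) : Prop :=
  (∀ u, Λ.transientAt u ≤ n) ∧ ∃ u, Λ.transientAt u = n

end BNL

/-- An abstract machine producing, for each input bit string, a global configuration string,
an attention condition, and a print string at every round. -/
structure Machine where
  ins : ℕ
  prints : ℕ
  conf : (ℕ → Bool) → ℕ → List Bool
  attn : (ℕ → Bool) → ℕ → Prop
  out : (ℕ → Bool) → ℕ → List Bool

/-- The output rounds of a machine on a given input, as an ordered subtype of `ℕ`. -/
abbrev Machine.Rounds (M : Machine) (u : ℕ → Bool) := {t : ℕ // M.attn u t}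

/-- The machine determined by a BNL-program. -/
def BNL.toM (Λ : BNL) : Machine :=
  ⟨Λ.I.card, Λ.Pr.card, Λ.confStr, Λ.attn, Λ.out⟩

/-- Asynchronous equivalence: equally many input and print positions and, on every input,
an order isomorphism between the output rounds under which the outputs agree. -/
def AsyncEquiv (M₁ M₂ : Machine) : Prop :=
  M₁.ins = M₂.ins ∧ M₁.prints = M₂.prints ∧
  ∀ u : ℕ → Bool, ∃ e : M₁.Rounds u ≃o M₂.Rounds u,
    ∀ t : M₁.Rounds u, M₁.out u t.val = M₂.out u (e t).val

/-- Global equivalence: asynchronous equivalence together with identical global configuration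
sequences and identical output rounds on every input. -/
def GlobalEquiv (M₁ M₂ : Machine) : Prop :=
  AsyncEquiv M₁ M₂ ∧ ∀ u t, M₁.conf u t = M₂.conf u t ∧ (M₁.attn u t ↔ M₂.attn u t)

/-- `M₁` is asynchronously equivalent to `M₂` with computation delay at most `D`:
matched output rounds `x` of `M₁` and `y` of `M₂` satisfy `y ≤ x` and `x ≤ D·y`. -/
def EquivWithDelay (M₁ M₂ : Machine) (D : ℕ) : Prop :=
  M₁.ins = M₂.ins ∧ M₁.prints = M₂.prints ∧
  ∀ u : ℕ → Bool, ∃ e : M₁.Rounds u ≃o M₂.Rounds u,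
    (∀ t : M₁.Rounds u, M₁.out u t.val = M₂.out u (e t).val) ∧
    ∀ t : M₁.Rounds u, (e t).val ≤ t.val ∧ t.val ≤ D * (e t).val

/-- A formula is open: of one of the forms `⊤`, `Y`, `¬Y`, `Y ∧ Z` for variables `Y`, `Z`. -/
def BForm.isOpen : BForm → Prop
  | .tru => True
  | .var _ => True
  | .not (.var _) => True
  | .and (.var _) (.var _) => True
  | _ => False

/-- A BNL-program is fully-open if the body of every iteration clause is open. -/
def BNL.FullyOpen (Λ : BNL) : Prop :=
  ∀ X ∈ Λ.T, (Λ.iter X).isOpen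

/-! The fully-open program runs `Λ` slowed down by the factor `d + 2`. Every node of the body of
an iteration clause `X :- ψ_X` becomes a gate of its own, and a gate at depth `δ` is scheduled to
be correct in phase `d + 1 - δ` of each block of `d + 2` rounds; the leaves read the original
variables through delay lines, which still hold their values from the start of the block. A cyclic
clock lets `X` take the value of its root gate only in the last phase, so `X` is off at all other
rounds and the output rounds of the new program are exactly the rounds `(d + 2)t` with `t` an
output round of `Λ`. There are `O(s(d + 1))` variables, each with a clause of size at most `3`. -/

namespace BForm

theorem one_le_size (φ : BForm) : 1 ≤ φ.size := by
  cases φ <;> simp [size]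

theorem size_le_three_of_isOpen {φ : BForm} (h : φ.isOpen) : φ.size ≤ 3 := by
  match φ, h with
  | tru, _ | var _, _ | not (var _), _ | and (var _) (var _), _ => simp [size]

/-- Paths are read from the root; `false` selects the first argument. -/
def subformulaAt : BForm → List Bool → Option BForm
  | φ, [] => some φ
  | not φ, false :: p => φ.subformulaAt p
  | and φ _, false :: p => φ.subformulaAt p
  | and _ ψ, true :: p => ψ.subformulaAt p
  | _, _ :: _ => none

@[simp]
theorem subformulaAt_nil (φ : BForm) : φ.subformulaAt [] = some φ := by
  cases φ <;> rfl

def positions : BForm → Finset (List Bool)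
  | not φ => insert [] (φ.positions.image (false :: ·))
  | and φ ψ => insert [] (φ.positions.image (false :: ·) ∪ ψ.positions.image (true :: ·))
  | _ => {[]}

theorem mem_positions {φ : BForm} {p : List Bool} :
    p ∈ φ.positions ↔ (φ.subformulaAt p).isSome := by
  induction φ generalizing p with
  | tru | var _ => cases p <;> simp [positions, subformulaAt]
  | not φ ih => rcases p with _ | ⟨_ | _, p⟩ <;> simp [positions, subformulaAt, ih]
  | and φ ψ ihφ ihψ => rcases p with _ | ⟨_ | _, p⟩ <;> simp [positions, subformulaAt, ihφ, ihψ]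

theorem card_positions_le (φ : BForm) : φ.positions.card ≤ φ.size := by
  induction φ with
  | tru | var _ => simp [positions, size]
  | not φ ih =>
    calc (positions (not φ)).card ≤ (φ.positions.image (false :: ·)).card + 1 :=
          Finset.card_insert_le _ _
      _ ≤ φ.size + 1 := by grw [Finset.card_image_le, ih]
  | and φ ψ ihφ ihψ =>
    calc (positions (and φ ψ)).card
        ≤ (φ.positions.image (false :: ·)).card + (ψ.positions.image (true :: ·)).card + 1 :=
          (Finset.card_insert_le _ _).trans (by grw [Finset.card_union_le])
      _ ≤ φ.size + ψ.size + 1 := by grw [Finset.card_image_le, Finset.card_image_le, ihφ, ihψ]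

theorem subformulaAt_append (φ : BForm) (p q : List Bool) :
    φ.subformulaAt (p ++ q) = (φ.subformulaAt p).bind (·.subformulaAt q) := by
  induction φ generalizing p with
  | tru | var _ => cases p <;> simp [subformulaAt]
  | not φ ih => rcases p with _ | ⟨_ | _, p⟩ <;> simp [subformulaAt, ih]
  | and φ ψ ihφ ihψ => rcases p with _ | ⟨_ | _, p⟩ <;> simp [subformulaAt, ihφ, ihψ]

theorem vars_subset_of_subformulaAt {φ ψ : BForm} {p : List Bool}
    (h : φ.subformulaAt p = some ψ) : ψ.vars ⊆ φ.vars := by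
  induction φ generalizing p with
  | tru | var _ => cases p <;> simp_all [subformulaAt]
  | not φ ih =>
    rcases p with _ | ⟨_ | _, p⟩ <;> simp only [subformulaAt, Option.some.injEq, reduceCtorEq] at h
    · simp [← h]
    · simpa [vars] using ih h
  | and φ ψ ihφ ihψ =>
    rcases p with _ | ⟨_ | _, p⟩ <;> simp only [subformulaAt, Option.some.injEq] at h
    · simp [← h]
    · exact (ihφ h).trans Finset.subset_union_left
    · exact (ihψ h).trans Finset.subset_union_right

theorem length_add_depth_le_of_subformulaAt {φ ψ : BForm} {p : List Bool}
    (h : φ.subformulaAt p = some ψ) : p.length + ψ.depth ≤ φ.depth := by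
  induction φ generalizing p with
  | tru | var _ => cases p <;> simp_all [subformulaAt]
  | not φ ih =>
    rcases p with _ | ⟨_ | _, p⟩ <;> simp only [subformulaAt, Option.some.injEq, reduceCtorEq] at h
    · simp [← h]
    · have := ih h; simp only [depth, List.length_cons]; omega
  | and φ ψ ihφ ihψ =>
    rcases p with _ | ⟨_ | _, p⟩ <;> simp only [subformulaAt, Option.some.injEq] at h
    · simp [← h]
    · have := ihφ h; simp only [depth, List.length_cons]; omega
    · have := ihψ h; simp only [depth, List.length_cons]; omega

end BForm

namespace Machine

theorem equivWithDelay_of_stretch {M₁ M₂ : Machine} {L D : ℕ} (hL : 0 < L) (hLD : L ≤ D)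
    (hins : M₁.ins = M₂.ins) (hprints : M₁.prints = M₂.prints)
    (hattn : ∀ u t, M₁.attn u (L * t) ↔ M₂.attn u t) (hdvd : ∀ u r, M₁.attn u r → L ∣ r)
    (hout : ∀ u t, M₁.out u (L * t) = M₂.out u t) : EquivWithDelay M₁ M₂ D := by
  refine ⟨hins, hprints, fun u => ?_⟩
  let f : M₂.Rounds u → M₁.Rounds u := fun t => ⟨L * t, (hattn u t).2 t.2⟩
  have hf : StrictMono f := fun _ _ h => Nat.mul_lt_mul_of_pos_left h hL
  have hsurj : Function.Surjective f := by
    rintro ⟨_, hr⟩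
    obtain ⟨t, rfl⟩ := hdvd u _ hr
    exact ⟨⟨t, (hattn u t).1 hr⟩, rfl⟩
  let e := StrictMono.orderIsoOfSurjective f hf hsurj
  refine ⟨e.symm, fun r => ?_, fun r => ?_⟩ <;> obtain ⟨t, rfl⟩ := e.surjective r <;>
    simp only [OrderIso.symm_apply_apply]
  · exact hout u t
  · exact ⟨Nat.le_mul_of_pos_left _ hL, Nat.mul_le_mul_right _ hLD⟩

theorem equivWithDelay_self (M : Machine) {D : ℕ} (hD : 1 ≤ D) : EquivWithDelay M M D :=
  equivWithDelay_of_stretch one_pos hD rfl rfl (by simp) (fun _ _ _ => one_dvd _) (by simp)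

end Machine

namespace BNL

theorem conf_succ (Λ : BNL) (u : ℕ → Bool) (t X : ℕ) :
    Λ.conf u (t + 1) X = (Λ.iter X).eval (Λ.conf u t) := rfl

theorem depth_iter_le (Λ : BNL) {X : ℕ} (hX : X ∈ Λ.T) : (Λ.iter X).depth ≤ Λ.depth :=
  Finset.le_sup (f := fun X => (Λ.iter X).depth) hX

theorem card_T_le_size (Λ : BNL) : Λ.T.card ≤ Λ.size := by
  calc Λ.T.card = ∑ _ ∈ Λ.T, 1 := (Finset.card_eq_sum_ones _)
    _ ≤ ∑ X ∈ Λ.T, (Λ.iter X).size := Finset.sum_le_sum fun X _ => BForm.one_le_size _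
    _ ≤ Λ.size := Nat.le_add_left _ _

theorem size_le_of_fullyOpen {Λ : BNL} (h : Λ.FullyOpen) : Λ.size ≤ 4 * Λ.T.card := by
  have hsum : ∑ X ∈ Λ.T, (Λ.iter X).size ≤ Λ.T.card * 3 :=
    Finset.sum_le_card_nsmul _ _ _ fun X hX => BForm.size_le_three_of_isOpen (h X hX)
  have hI : (Λ.T \ Λ.I).card ≤ Λ.T.card := Finset.card_le_card Finset.sdiff_subset
  unfold BNL.size
  omega

end BNL

/-- `delay Y j` carries the value `Y` had `j + 1` rounds earlier, and `gate X p` the value of the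
node at path `p` of the body of the iteration clause of `X`. -/
inductive FreshVar
  | clock (i : ℕ)
  | delay (Y j : ℕ)
  | gate (X : ℕ) (p : List Bool)

namespace FreshVar

def toSum : FreshVar → ℕ ⊕ (ℕ × ℕ) ⊕ (ℕ × List Bool)
  | clock i => .inl i
  | delay Y j => .inr (.inl (Y, j))
  | gate X p => .inr (.inr (X, p))

def ofSum : ℕ ⊕ (ℕ × ℕ) ⊕ (ℕ × List Bool) → FreshVar
  | .inl i => clock i
  | .inr (.inl (Y, j)) => delay Y j
  | .inr (.inr (X, p)) => gate X p

instance : Encodable FreshVar :=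
  Encodable.ofLeftInverse toSum ofSum (by rintro (_ | _ | _) <;> rfl)

instance : DecidableEq FreshVar := Encodable.decidableEqOfEncodable _

def init : FreshVar → Bool
  | clock 0 => true
  | _ => false

end FreshVar

namespace BNL

open BForm FreshVar Encodable

variable (Λ : BNL)

def fresh (v : FreshVar) : ℕ := Λ.T.sup id + 1 + encode v

def freshOf? (n : ℕ) : Option FreshVar := decode (n - (Λ.T.sup id + 1))

theorem freshOf?_fresh (v : FreshVar) : Λ.freshOf? (Λ.fresh v) = some v := by
  simp [freshOf?, fresh]

theorem fresh_notMem (v : FreshVar) : Λ.fresh v ∉ Λ.T := fun h => by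
  have := Finset.le_sup (f := id) h
  simp only [fresh, id] at this
  omega

def lag (Y : ℕ) : ℕ → ℕ
  | 0 => Y
  | j + 1 => Λ.fresh (delay Y j)

def gateClause (X : ℕ) (p : List Bool) : BForm :=
  match (Λ.iter X).subformulaAt p with
  | some (.var Y) => .var (Λ.lag Y (Λ.depth - p.length))
  | some (.not _) => .not (.var (Λ.fresh (gate X (p ++ [false]))))
  | some (.and _ _) =>
      .and (.var (Λ.fresh (gate X (p ++ [false])))) (.var (Λ.fresh (gate X (p ++ [true]))))
  | _ => .tru

def freshClause : FreshVar → BForm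
  | clock 0 => .var (Λ.fresh (clock (Λ.depth + 1)))
  | clock (i + 1) => .var (Λ.fresh (clock i))
  | delay Y j => .var (Λ.lag Y j)
  | gate X p => Λ.gateClause X p

def origClause (X : ℕ) : BForm :=
  .and (.var (Λ.fresh (gate X []))) (.var (Λ.fresh (clock (Λ.depth + 1))))

def openIter (n : ℕ) : BForm :=
  if n ∈ Λ.T then Λ.origClause n else ((Λ.freshOf? n).map Λ.freshClause).getD .tru

def openTerm (n : ℕ) : Bool :=
  if n ∈ Λ.T then Λ.term n else ((Λ.freshOf? n).map FreshVar.init).getD false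

theorem openIter_of_mem {X : ℕ} (hX : X ∈ Λ.T) : Λ.openIter X = Λ.origClause X := if_pos hX

theorem openIter_fresh (v : FreshVar) : Λ.openIter (Λ.fresh v) = Λ.freshClause v := by
  simp [openIter, fresh_notMem, freshOf?_fresh]

theorem openTerm_fresh (v : FreshVar) : Λ.openTerm (Λ.fresh v) = v.init := by
  simp [openTerm, fresh_notMem, freshOf?_fresh]

def freshVars : Finset FreshVar :=
  (Finset.range (Λ.depth + 2)).image clock ∪
    (Λ.T ×ˢ Finset.range Λ.depth).image (fun q => delay q.1 q.2) ∪
    Λ.T.biUnion fun X => (Λ.iter X).positions.image (gate X)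

def openT : Finset ℕ := Λ.T ∪ Λ.freshVars.image Λ.fresh

theorem subset_openT : Λ.T ⊆ Λ.openT := Finset.subset_union_left

theorem fresh_mem_openT {v : FreshVar} (hv : v ∈ Λ.freshVars) : Λ.fresh v ∈ Λ.openT :=
  Finset.mem_union_right _ (Finset.mem_image_of_mem _ hv)

theorem fresh_clock_mem_openT {i : ℕ} (hi : i ≤ Λ.depth + 1) : Λ.fresh (clock i) ∈ Λ.openT :=
  Λ.fresh_mem_openT <| Finset.mem_union_left _ <| Finset.mem_union_left _ <|
    Finset.mem_image_of_mem _ (Finset.mem_range.2 (by omega))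

theorem lag_mem_openT {Y j : ℕ} (hY : Y ∈ Λ.T) (hj : j ≤ Λ.depth) : Λ.lag Y j ∈ Λ.openT := by
  cases j with
  | zero => exact Λ.subset_openT hY
  | succ j =>
    exact Λ.fresh_mem_openT <| Finset.mem_union_left _ <| Finset.mem_union_right _ <|
      Finset.mem_image.2 ⟨(Y, j), Finset.mem_product.2 ⟨hY, Finset.mem_range.2 (by omega)⟩, rfl⟩

theorem fresh_gate_mem_openT {X : ℕ} {p : List Bool} (hX : X ∈ Λ.T)
    (hp : ((Λ.iter X).subformulaAt p).isSome) : Λ.fresh (gate X p) ∈ Λ.openT :=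
  Λ.fresh_mem_openT <| Finset.mem_union_right _ <| Finset.mem_biUnion.2
    ⟨X, hX, Finset.mem_image_of_mem _ (mem_positions.2 hp)⟩

theorem gateClause_spec {X : ℕ} (hX : X ∈ Λ.T) {p : List Bool}
    (hp : ((Λ.iter X).subformulaAt p).isSome) :
    (Λ.gateClause X p).isOpen ∧ (Λ.gateClause X p).vars ⊆ Λ.openT := by
  obtain ⟨φ, hφ⟩ := Option.isSome_iff_exists.1 hp
  have hchild (b : Bool) (h : (φ.subformulaAt [b]).isSome) :
      Λ.fresh (gate X (p ++ [b])) ∈ Λ.openT :=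
    Λ.fresh_gate_mem_openT hX (by simpa [subformulaAt_append, hφ] using h)
  cases φ with
  | tru => simp [gateClause, hφ, isOpen, vars]
  | var Y =>
    have hY : Y ∈ Λ.T := Λ.hiter X hX (vars_subset_of_subformulaAt hφ (by simp [vars]))
    simpa [gateClause, hφ, isOpen, vars] using Λ.lag_mem_openT hY (Nat.sub_le _ _)
  | not φ =>
    simpa [gateClause, hφ, isOpen, vars] using hchild false (by simp [subformulaAt])
  | and φ ψ =>
    simp [gateClause, hφ, isOpen, vars, Finset.insert_subset_iff,
      hchild false (by simp [subformulaAt]), hchild true (by simp [subformulaAt])]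

theorem freshClause_spec {v : FreshVar} (hv : v ∈ Λ.freshVars) :
    (Λ.freshClause v).isOpen ∧ (Λ.freshClause v).vars ⊆ Λ.openT := by
  simp only [freshVars, Finset.mem_union, Finset.mem_image, Finset.mem_biUnion,
    Finset.mem_range, Finset.mem_product] at hv
  rcases hv with (⟨i, hi, rfl⟩ | ⟨⟨Y, j⟩, ⟨hY, hj⟩, rfl⟩) | ⟨X, hX, p, hp, rfl⟩
  · cases i with
    | zero => simpa [freshClause, isOpen, vars] using Λ.fresh_clock_mem_openT le_rfl
    | succ i => simpa [freshClause, isOpen, vars] using Λ.fresh_clock_mem_openT (by omega)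
  · simpa [freshClause, isOpen, vars] using Λ.lag_mem_openT hY hj.le
  · exact Λ.gateClause_spec hX (mem_positions.1 hp)

theorem openIter_spec {n : ℕ} (hn : n ∈ Λ.openT) :
    (Λ.openIter n).isOpen ∧ (Λ.openIter n).vars ⊆ Λ.openT := by
  rcases Finset.mem_union.1 hn with hn | hn
  · rw [Λ.openIter_of_mem hn]
    simp [origClause, isOpen, vars, Finset.insert_subset_iff,
      Λ.fresh_gate_mem_openT hn (p := []) (by simp), Λ.fresh_clock_mem_openT le_rfl]
  · obtain ⟨v, hv, rfl⟩ := Finset.mem_image.1 hn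
    rw [Λ.openIter_fresh]
    exact Λ.freshClause_spec hv

def toFullyOpen : BNL where
  T := Λ.openT
  I := Λ.I
  hIT := Λ.hIT.trans Λ.subset_openT
  term := Λ.openTerm
  iter := Λ.openIter
  hiter _ hX := (Λ.openIter_spec hX).2
  Pr := Λ.Pr
  hPr := Λ.hPr.trans Λ.subset_openT
  At := Λ.At
  hAt := Λ.hAt.trans Λ.subset_openT

theorem toFullyOpen_fullyOpen : Λ.toFullyOpen.FullyOpen := fun _ hX => (Λ.openIter_spec hX).1

section Dynamics

variable (u : ℕ → Bool)

theorem toFullyOpen_conf_zero_of_mem {X : ℕ} (hX : X ∈ Λ.T) :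
    Λ.toFullyOpen.conf u 0 X = Λ.conf u 0 X := by
  simp [conf, toFullyOpen, openTerm, hX]

theorem toFullyOpen_conf_zero_fresh (v : FreshVar) :
    Λ.toFullyOpen.conf u 0 (Λ.fresh v) = v.init := by
  have hI : Λ.fresh v ∉ Λ.I := fun h => Λ.fresh_notMem v (Λ.hIT h)
  simp [conf, toFullyOpen, hI, openTerm_fresh]

theorem toFullyOpen_conf_succ_fresh (r : ℕ) (v : FreshVar) :
    Λ.toFullyOpen.conf u (r + 1) (Λ.fresh v) = (Λ.freshClause v).eval (Λ.toFullyOpen.conf u r) :=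
  congrArg (eval _) (Λ.openIter_fresh v)

theorem toFullyOpen_conf_succ_of_mem (r : ℕ) {X : ℕ} (hX : X ∈ Λ.T) :
    Λ.toFullyOpen.conf u (r + 1) X = (Λ.toFullyOpen.conf u r (Λ.fresh (gate X [])) &&
      Λ.toFullyOpen.conf u r (Λ.fresh (clock (Λ.depth + 1)))) := by
  rw [conf_succ]
  exact congrArg (eval _) (Λ.openIter_of_mem hX)

theorem toFullyOpen_conf_clock (r : ℕ) {i : ℕ} (hi : i ≤ Λ.depth + 1) :
    Λ.toFullyOpen.conf u r (Λ.fresh (clock i)) = decide (r % (Λ.depth + 2) = i) := by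
  induction r generalizing i with
  | zero => cases i <;> simp [toFullyOpen_conf_zero_fresh, FreshVar.init]
  | succ r ih =>
    have hsucc := Nat.add_mod_eq_ite (k := Λ.depth + 2) (m := r) (n := 1)
    have hlt := Nat.mod_lt r (show 0 < Λ.depth + 2 by omega)
    rw [Nat.mod_eq_of_lt (show 1 < Λ.depth + 2 by omega)] at hsucc
    rw [toFullyOpen_conf_succ_fresh]
    cases i with
    | zero => simp only [freshClause, eval, ih le_rfl, decide_eq_decide]; split at hsucc <;> omega
    | succ i =>
      simp only [freshClause, eval, ih (by omega : i ≤ _), decide_eq_decide]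
      split at hsucc <;> omega

theorem toFullyOpen_conf_lag (r Y j : ℕ) :
    Λ.toFullyOpen.conf u (r + j) (Λ.lag Y j) = Λ.toFullyOpen.conf u r Y := by
  induction j with
  | zero => rfl
  | succ j ih => rw [← add_assoc, lag, toFullyOpen_conf_succ_fresh, freshClause, eval, ih]

theorem toFullyOpen_conf_gate {t X : ℕ} (hX : X ∈ Λ.T)
    (hsync : ∀ Y ∈ Λ.T, Λ.toFullyOpen.conf u ((Λ.depth + 2) * t) Y = Λ.conf u t Y)
    {φ : BForm} {p : List Bool} (hp : (Λ.iter X).subformulaAt p = some φ) :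
    Λ.toFullyOpen.conf u ((Λ.depth + 2) * t + (Λ.depth - p.length) + 1) (Λ.fresh (gate X p)) =
      φ.eval (Λ.conf u t) := by
  have hround {q : List Bool} {ψ : BForm} (hq : (Λ.iter X).subformulaAt q = some ψ)
      (hψ : 1 ≤ ψ.depth) (b : Bool) : (Λ.depth + 2) * t + (Λ.depth - (q ++ [b]).length) + 1 =
        (Λ.depth + 2) * t + (Λ.depth - q.length) := by
    have := (length_add_depth_le_of_subformulaAt hq).trans (Λ.depth_iter_le hX)
    simp only [List.length_append, List.length_singleton]
    omega
  induction φ generalizing p with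
  | tru => simp [toFullyOpen_conf_succ_fresh, freshClause, gateClause, hp, eval]
  | var Y =>
    have hY : Y ∈ Λ.T := Λ.hiter X hX (vars_subset_of_subformulaAt hp (by simp [vars]))
    simp only [toFullyOpen_conf_succ_fresh, freshClause, gateClause, hp, eval]
    rw [toFullyOpen_conf_lag, hsync Y hY]
  | not φ ih =>
    have h := ih (p := p ++ [false]) (by simp [subformulaAt_append, hp, subformulaAt])
    rw [hround hp (by simp [BForm.depth]) _] at h
    simp [toFullyOpen_conf_succ_fresh, freshClause, gateClause, hp, eval, h]
  | and φ ψ ihφ ihψ =>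
    have hφ := ihφ (p := p ++ [false]) (by simp [subformulaAt_append, hp, subformulaAt])
    have hψ := ihψ (p := p ++ [true]) (by simp [subformulaAt_append, hp, subformulaAt])
    rw [hround hp (by simp [BForm.depth]) _] at hφ hψ
    simp [toFullyOpen_conf_succ_fresh, freshClause, gateClause, hp, eval, hφ, hψ]

theorem toFullyOpen_conf_mul (t : ℕ) :
    ∀ X ∈ Λ.T, Λ.toFullyOpen.conf u ((Λ.depth + 2) * t) X = Λ.conf u t X := by
  induction t with
  | zero => exact fun X hX => Λ.toFullyOpen_conf_zero_of_mem u hX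
  | succ t ih =>
    intro X hX
    have hgate := Λ.toFullyOpen_conf_gate u hX ih (p := []) (subformulaAt_nil _)
    have hclock : ((Λ.depth + 2) * t + Λ.depth + 1) % (Λ.depth + 2) = Λ.depth + 1 := by
      rw [add_assoc, Nat.mul_add_mod, Nat.mod_eq_of_lt (by omega)]
    rw [List.length_nil, Nat.sub_zero] at hgate
    rw [show (Λ.depth + 2) * (t + 1) = (Λ.depth + 2) * t + Λ.depth + 1 + 1 by ring,
      toFullyOpen_conf_succ_of_mem _ _ _ hX, hgate, toFullyOpen_conf_clock _ _ _ le_rfl,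
      hclock, decide_eq_true rfl, Bool.and_true, conf_succ]

theorem toFullyOpen_conf_of_not_dvd {r X : ℕ} (hX : X ∈ Λ.T) (hr : ¬ (Λ.depth + 2) ∣ r) :
    Λ.toFullyOpen.conf u r X = false := by
  cases r with
  | zero => exact absurd (dvd_zero _) hr
  | succ r =>
    have hphase : r % (Λ.depth + 2) ≠ Λ.depth + 1 := fun h =>
      hr (Nat.dvd_of_mod_eq_zero (Nat.succ_mod_succ_eq_zero_iff.2 h))
    simp [toFullyOpen_conf_succ_of_mem _ _ _ hX, toFullyOpen_conf_clock _ _ _ le_rfl, hphase]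

end Dynamics

theorem toFullyOpen_equivWithDelay {D : ℕ} (hD : Λ.depth + 2 ≤ D) :
    EquivWithDelay Λ.toFullyOpen.toM Λ.toM D := by
  refine Machine.equivWithDelay_of_stretch (L := Λ.depth + 2) (by omega) hD rfl rfl
    (fun u t => ?_) (fun u r ⟨X, hXA, hX⟩ => ?_) (fun u t => ?_)
  · exact exists_congr fun X => and_congr_right fun hXA => by
      rw [toFullyOpen_conf_mul _ _ _ X (Λ.hAt hXA)]
  · by_contra hr
    rw [toFullyOpen_conf_of_not_dvd _ _ (Λ.hAt hXA) hr] at hX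
    exact Bool.false_ne_true hX
  · exact List.map_congr_left fun X hX =>
      Λ.toFullyOpen_conf_mul u t X (Λ.hPr ((Finset.mem_sort _).1 hX))

theorem card_freshVars_le :
    Λ.freshVars.card ≤ Λ.depth + 2 + Λ.T.card * Λ.depth + ∑ X ∈ Λ.T, (Λ.iter X).size := by
  unfold freshVars
  grw [Finset.card_union_le, Finset.card_union_le, Finset.card_image_le, Finset.card_image_le,
    Finset.card_biUnion_le, Finset.card_range, Finset.card_product, Finset.card_range]
  gcongr with X
  exact Finset.card_image_le.trans (card_positions_le _)

theorem size_toFullyOpen_le (hT : Λ.T.Nonempty) :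
    Λ.toFullyOpen.size ≤ 16 * Λ.size * (Λ.depth + 1) := by
  have hcard : Λ.openT.card ≤ Λ.T.card + Λ.freshVars.card :=
    Finset.card_union_le _ _ |>.trans (by grw [Finset.card_image_le])
  have hsum : ∑ X ∈ Λ.T, (Λ.iter X).size ≤ Λ.size := Nat.le_add_left _ _
  have hTs := Λ.card_T_le_size
  have hs : 1 ≤ Λ.size := hT.card_pos.trans_le hTs
  have hfresh := Λ.card_freshVars_le
  have hsize : Λ.toFullyOpen.size ≤ 4 * Λ.openT.card :=
    size_le_of_fullyOpen Λ.toFullyOpen_fullyOpen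
  nlinarith

end BNL

/-- Every BNL-program of size `s` and depth `d` has an asynchronously
equivalent fully-open BNL-program over a superset of its schema variables, of size at most
`C·s·(d+1)` and computation delay at most `C·(d+1)`. -/
theorem bnl_to_fully_open :
    ∃ C : ℕ, ∀ Λ : BNL, ∃ Λ' : BNL,
      Λ.T ⊆ Λ'.T ∧ Λ'.FullyOpen ∧
      Λ'.size ≤ C * Λ.size * (Λ.depth + 1) ∧
      EquivWithDelay Λ'.toM Λ.toM (C * (Λ.depth + 1)) := by
  refine ⟨16, fun Λ => ?_⟩
  rcases Λ.T.eq_empty_or_nonempty with hT | hT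
  · exact ⟨Λ, subset_rfl, by simp [BNL.FullyOpen, hT], by simp [BNL.size, hT],
      Machine.equivWithDelay_self _ (by omega)⟩
  · exact ⟨Λ.toFullyOpen, Λ.subset_openT, Λ.toFullyOpen_fullyOpen, Λ.size_toFullyOpen_le hT,
      Λ.toFullyOpen_equivWithDelay (by omega)⟩
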